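/- arXiv:1407.0163 — 2 statements merged into one kernel-verified Lean document; each statement's English description precedes it below -/
import Mathlib

section
/- Suppose (a_n, u_n, c_n) are solutions of -Δu = au - f(u) - ch with (a_n) and (c_n) bounded sequences of reals, where f satisfies lim_{u→∞} f(u)/u = +∞, f ≥ 0, and h ∈ L^∞(Ω). Then the sequence (max_Ω u_n) is bounded above. -/
open Set Filter

/-- If (aₙ,uₙ,cₙ) solve -Δu = au - f(u) - ch with (aₙ), (cₙ) bounded,
f ≥ 0 superlinear, h ∈ L^∞, then (max uₙ) is bounded above. The maximum point xₙ
of uₙ satisfies aₙuₙ(xₙ) - f(uₙ(xₙ)) - cₙh(xₙ) ≥ 0. -/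
theorem stmt6 {N : ℕ} (Ω : Set (EuclideanSpace ℝ (Fin N)))
    (f : ℝ → ℝ) (h : EuclideanSpace ℝ (Fin N) → ℝ)
    (hfc : Continuous f) (hfnn : ∀ s, 0 ≤ f s)
    (hsuper : Tendsto (fun s => f s / s) atTop atTop)
    (Ch : ℝ) (hCh : ∀ x ∈ Ω, |h x| ≤ Ch)
    (a c : ℕ → ℝ) (u : ℕ → EuclideanSpace ℝ (Fin N) → ℝ)
    (x : ℕ → EuclideanSpace ℝ (Fin N))
    (ha : ∃ A, ∀ n, |a n| ≤ A) (hc : ∃ Cc, ∀ n, |c n| ≤ Cc)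
    (hx : ∀ n, x n ∈ Ω) (hmaxpt : ∀ n, ∀ y ∈ Ω, u n y ≤ u n (x n))
    (hineq : ∀ n, 0 ≤ a n * u n (x n) - f (u n (x n)) - c n * h (x n)) :
    ∃ B, ∀ n, ∀ y ∈ Ω, u n y ≤ B := by
  obtain ⟨A, hA⟩ := ha
  obtain ⟨Cc, hCc⟩ := hc
  have hA0 : 0 ≤ A := le_trans (abs_nonneg _) (hA 0)
  have hCc0 : 0 ≤ Cc := le_trans (abs_nonneg _) (hCc 0)
  have hCh0 : 0 ≤ Ch := le_trans (abs_nonneg _) (hCh _ (hx 0))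
  obtain ⟨s₀, hs₀⟩ := (hsuper.eventually_ge_atTop (A + 1)).exists_forall_of_atTop
  set B : ℝ := max s₀ (max 1 (Cc * Ch)) with hB
  refine ⟨B, fun n y hy => le_trans (hmaxpt n y hy) ?_⟩
  by_contra hM
  push_neg at hM
  set M := u n (x n) with hMdef
  have hMs₀ : s₀ ≤ M := le_of_lt (lt_of_le_of_lt (le_max_left _ _) hM)
  have hM1 : (1:ℝ) < M := lt_of_le_of_lt (le_trans (le_max_left _ _) (le_max_right _ _)) hM
  have hM0 : 0 < M := lt_trans one_pos hM1
  have hMCC : Cc * Ch < M := lt_of_le_of_lt (le_trans (le_max_right _ _) (le_max_right _ _)) hM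
  have hfM : A + 1 ≤ f M / M := hs₀ M hMs₀
  have hfM' : (A + 1) * M ≤ f M := by
    have := mul_le_mul_of_nonneg_right hfM (le_of_lt hM0)
    rwa [div_mul_cancel₀ _ (ne_of_gt hM0)] at this
  have h1 : f M ≤ a n * M - c n * h (x n) := by linarith [hineq n]
  have h2 : a n * M ≤ A * M := mul_le_mul_of_nonneg_right (le_trans (le_abs_self _) (hA n)) (le_of_lt hM0)
  have h3 : -(c n * h (x n)) ≤ Cc * Ch := by
    calc -(c n * h (x n)) ≤ |c n * h (x n)| := neg_le_abs _
      _ = |c n| * |h (x n)| := abs_mul _ _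
      _ ≤ Cc * Ch := mul_le_mul (hCc n) (hCh _ (hx n)) (abs_nonneg _) hCc0
  linarith
end

section
/- Suppose T > M > 0 in the setting of the set Λ = {(t,c) : tφ + c(Δ+λ₁)^{-1}h ≤ M}. Then for every t with M < t < T, the section S_t = {c : (t,c) ∈ Λ} satisfies either S_t ⊂ (0, ∞) or S_t ⊂ (-∞, 0); consequently either c⁻(M) = 0 or c⁺(M) = 0, where c⁻(t) = min S_t and c⁺(t) = max S_t. -/
open MeasureTheory Set

/-- Suppose T > M > 0 for Λ = {(t,c) : tφ + cy ≤ M in Ω}. Then for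
every M < t < T the section S_t = {c : (t,c) ∈ Λ} lies entirely in (0,∞) or
entirely in (-∞,0); consequently c⁻(M) = 0 or c⁺(M) = 0. -/
theorem stmt12 {N : ℕ} (Ω : Set (EuclideanSpace ℝ (Fin N))) (hΩo : IsOpen Ω)
    (φ y : EuclideanSpace ℝ (Fin N) → ℝ) (M T : ℝ) (hM : 0 < M) (hMT : M < T)
    (hφpos : ∀ x ∈ Ω, 0 < φ x) (hφle : ∀ x ∈ Ω, φ x ≤ 1)
    (hφmax : ∃ x ∈ Ω, φ x = 1)
    (hyc : ContinuousOn y (closure Ω))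
    (Λ : Set (ℝ × ℝ))
    (hΛ : Λ = {p : ℝ × ℝ | ∀ x ∈ Ω, p.1 * φ x + p.2 * y x ≤ M})
    (cminus cplus : ℝ → ℝ)
    (hmin : ∀ t ≤ T, IsLeast {c | (t, c) ∈ Λ} (cminus t))
    (hmax : ∀ t ≤ T, IsGreatest {c | (t, c) ∈ Λ} (cplus t))
    (hT : ∀ p ∈ Λ, p.1 ≤ T) (hTmem : ∃ c, (T, c) ∈ Λ) :
    (∀ t, M < t → t < T →
      (∀ c, (t, c) ∈ Λ → 0 < c) ∨ (∀ c, (t, c) ∈ Λ → c < 0)) ∧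
      (cminus M = 0 ∨ cplus M = 0) := by
  obtain ⟨x₀, hx₀, hφx₀⟩ := hφmax
  -- key: for M < t < T, any c in the section satisfies c * y x₀ < 0
  have key : ∀ t, M < t → ∀ c, (t, c) ∈ Λ → c * y x₀ < 0 := by
    intro t htM c hc
    rw [hΛ] at hc
    have h := hc x₀ hx₀
    simp only [hφx₀, mul_one] at h
    linarith
  have part1 : ∀ t, M < t → t < T →
      (∀ c, (t, c) ∈ Λ → 0 < c) ∨ (∀ c, (t, c) ∈ Λ → c < 0) := by
    intro t htM htT
    by_cases hy : 0 < y x₀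
    · right
      intro c hc
      have h := key t htM c hc
      nlinarith
    · left
      intro c hc
      have h := key t htM c hc
      push_neg at hy
      nlinarith
  refine ⟨part1, ?_⟩
  -- 0 ∈ S_M
  have h0M : (M, (0:ℝ)) ∈ Λ := by
    rw [hΛ]
    intro x hx
    have h1 := hφle x hx
    have h2 := (hφpos x hx).le
    show M * φ x + 0 * y x ≤ M
    nlinarith
  have hminM := hmin M hMT.le
  have hmaxM := hmax M hMT.le
  have hle : cminus M ≤ 0 := hminM.2 h0M
  have hge : 0 ≤ cplus M := hmaxM.2 h0M
  by_contra hcon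
  push_neg at hcon
  obtain ⟨h1, h2⟩ := hcon
  have hlt : cminus M < 0 := lt_of_le_of_ne hle h1
  have hgt : 0 < cplus M := lt_of_le_of_ne hge (Ne.symm h2)
  obtain ⟨cT, hcT⟩ := hTmem
  -- convexity
  have hconv : ∀ a : ℝ, (M, a) ∈ Λ → ∀ ε : ℝ, 0 ≤ ε → ε ≤ 1 →
      (M + ε * (T - M), (1 - ε) * a + ε * cT) ∈ Λ := by
    intro a ha ε hε0 hε1
    rw [hΛ] at ha hcT ⊢
    intro x hx
    have h1 := ha x hx
    have h2 := hcT x hx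
    simp only at h1 h2 ⊢
    nlinarith [mul_le_of_le_one_left (le_of_lt hM) hε1]
  set K : ℝ := |cT| + 1 with hK
  have hKpos : 0 < K := by positivity
  set ε : ℝ := min (1/2) (min (-cminus M / (4 * K)) (cplus M / (4 * K))) with hε
  have hε0 : 0 < ε := by
    exact lt_min (by norm_num)
      (lt_min (div_pos (by linarith) (by positivity)) (div_pos hgt (by positivity)))
  have hεhalf : ε ≤ 1/2 := min_le_left _ _
  have hε1 : ε * (4 * K) ≤ -cminus M := by
    have : ε ≤ -cminus M / (4 * K) := le_trans (min_le_right _ _) (min_le_left _ _)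
    calc ε * (4 * K) ≤ (-cminus M / (4 * K)) * (4 * K) := by
          apply mul_le_mul_of_nonneg_right this (by positivity)
      _ = -cminus M := by field_simp
  have hε2 : ε * (4 * K) ≤ cplus M := by
    have : ε ≤ cplus M / (4 * K) := le_trans (min_le_right _ _) (min_le_right _ _)
    calc ε * (4 * K) ≤ (cplus M / (4 * K)) * (4 * K) := by
          apply mul_le_mul_of_nonneg_right this (by positivity)
      _ = cplus M := by field_simp
  set t : ℝ := M + ε * (T - M) with ht
  have htM : M < t := by nlinarith
  have htT : t < T := by nlinarith
  have hcTK : |cT| ≤ K := by simp [hK]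
  have habs := abs_le.mp hcTK
  -- two members of the section
  have hmem1 : (t, (1 - ε) * cminus M + ε * cT) ∈ Λ :=
    hconv _ hminM.1 ε hε0.le (by linarith)
  have hmem2 : (t, (1 - ε) * cplus M + ε * cT) ∈ Λ :=
    hconv _ hmaxM.1 ε hε0.le (by linarith)
  have hc1 : (1 - ε) * cminus M + ε * cT < 0 := by
    have h1 : (1 - ε) * cminus M ≤ cminus M / 2 := by nlinarith
    have h2 : ε * cT ≤ ε * K := by nlinarith
    nlinarith
  have hc2 : 0 < (1 - ε) * cplus M + ε * cT := by
    have h1 : cplus M / 2 ≤ (1 - ε) * cplus M := by nlinarith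
    have h2 : -(ε * K) ≤ ε * cT := by nlinarith
    nlinarith
  rcases part1 t htM htT with hp | hp
  · exact absurd (hp _ hmem1) (by linarith)
  · exact absurd (hp _ hmem2) (by linarith)
end
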